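/- arXiv:1804.02500 — 5 statements merged into one kernel-verified Lean document; each statement's English description precedes it below -/
import Mathlib

section
/- Suppose for all n ≥ 3 (equivalently, for all primes p_n ≥ 5) the prime gap satisfies p_{n+1} - p_n < (22/25) · sqrt(p_n) · ln(p_n). Then for all n ≥ 1, sqrt(p_{n+1})/ln(p_{n+1}) - sqrt(p_n)/ln(p_n) < 11/25. -/
/-- `prime n` is the n-th prime, with `prime 1 = 2`. -/
noncomputable def prime (n : ℕ) : ℕ := Nat.nth Nat.Prime (n - 1)

lemma prime_one : prime 1 = 2 := by
  have := Nat.nth_count (p := Nat.Prime) (n := 2) (by norm_num)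
  simpa [prime, Nat.count_succ] using this

lemma prime_two : prime 2 = 3 := by
  have := Nat.nth_count (p := Nat.Prime) (n := 3) (by norm_num)
  simpa [prime, Nat.count_succ] using this

lemma prime_three : prime 3 = 5 := by
  have := Nat.nth_count (p := Nat.Prime) (n := 5) (by norm_num)
  simpa [prime, Nat.count_succ] using this

lemma log_three_ge : (1:ℝ) ≤ Real.log 3 := by
  rw [Real.le_log_iff_exp_le (by norm_num)]
  exact le_of_lt (lt_trans Real.exp_one_lt_d9 (by norm_num))

lemma log_four : Real.log 4 = 2 * Real.log 2 := by
  rw [show (4:ℝ) = 2^2 by norm_num, Real.log_pow]; push_cast; ring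

lemma log_three_le : Real.log 3 ≤ 1.3862943616 := by
  have h1 : Real.log 3 ≤ Real.log 4 := Real.log_le_log (by norm_num) (by norm_num)
  have := Real.log_two_lt_d9
  rw [log_four] at h1; linarith

lemma log_five_ge : (1.3862943606:ℝ) ≤ Real.log 5 := by
  have h1 : Real.log 4 ≤ Real.log 5 := Real.log_le_log (by norm_num) (by norm_num)
  have := Real.log_two_gt_d9
  rw [log_four] at h1; linarith

lemma sqrt_le_of_sq {x y : ℝ} (hy : 0 ≤ y) (h : x ≤ y^2) : Real.sqrt x ≤ y := by
  calc Real.sqrt x ≤ Real.sqrt (y^2) := Real.sqrt_le_sqrt h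
  _ = y := by rw [Real.sqrt_sq hy]

lemma le_sqrt_of_sq {x y : ℝ} (hx : 0 ≤ x) (h : x^2 ≤ y) : x ≤ Real.sqrt y := by
  calc x = Real.sqrt (x^2) := (Real.sqrt_sq hx).symm
  _ ≤ Real.sqrt y := Real.sqrt_le_sqrt h

theorem log_modified_andrica
    (h : ∀ n : ℕ, 3 ≤ n →
      (prime (n+1) : ℝ) - prime n <
        22/25 * Real.sqrt (prime n) * Real.log (prime n)) :
    ∀ n : ℕ, 1 ≤ n →
      Real.sqrt (prime (n+1)) / Real.log (prime (n+1)) -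
        Real.sqrt (prime n) / Real.log (prime n) < 11/25 := by
  intro n hn
  rcases lt_or_ge n 3 with h3 | h3
  · interval_cases n
    · -- n = 1 : √3/log3 - √2/log2 < 11/25
      rw [show (1:ℕ)+1 = 2 from rfl, prime_one, prime_two]
      push_cast
      have hl2 := Real.log_two_gt_d9
      have hl2' := Real.log_two_lt_d9
      have hl3 := log_three_ge
      have hs3 : Real.sqrt 3 ≤ 1.74 := sqrt_le_of_sq (by norm_num) (by norm_num)
      have hs2 : (1.41:ℝ) ≤ Real.sqrt 2 := le_sqrt_of_sq (by norm_num) (by norm_num)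
      have h1 : Real.sqrt 3 / Real.log 3 ≤ 1.74 := by
        calc Real.sqrt 3 / Real.log 3 ≤ 1.74 / 1 := by
              apply div_le_div₀ (by norm_num) hs3 (by norm_num) hl3
        _ = 1.74 := by norm_num
      have h2 : (2.03:ℝ) ≤ Real.sqrt 2 / Real.log 2 := by
        calc (2.03:ℝ) ≤ 1.41 / 0.6931471808 := by norm_num
        _ ≤ Real.sqrt 2 / Real.log 2 := by
              apply div_le_div₀ (Real.sqrt_nonneg 2) hs2 (by linarith) (by linarith)
      linarith
    · -- n = 2 : √5/log5 - √3/log3 < 11/25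
      rw [show (2:ℕ)+1 = 3 from rfl, prime_two, prime_three]
      push_cast
      have hl3 := log_three_le
      have hl3' := log_three_ge
      have hl5 := log_five_ge
      have hs5 : Real.sqrt 5 ≤ 2.2361 := sqrt_le_of_sq (by norm_num) (by norm_num)
      have hs3 : (1.732:ℝ) ≤ Real.sqrt 3 := le_sqrt_of_sq (by norm_num) (by norm_num)
      have h1 : Real.sqrt 5 / Real.log 5 ≤ 2.2361 / 1.3862943606 := by
        apply div_le_div₀ (by norm_num) hs5 (by norm_num) hl5
      have h2 : (1.732:ℝ) / 1.3862943616 ≤ Real.sqrt 3 / Real.log 3 := by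
        apply div_le_div₀ (Real.sqrt_nonneg 3) hs3 (by linarith) hl3
      have : (2.2361:ℝ) / 1.3862943606 - 1.732 / 1.3862943616 < 11/25 := by norm_num
      linarith
  · -- n ≥ 3
    set P : ℝ := (prime n : ℝ) with hPdef
    set Q : ℝ := (prime (n+1) : ℝ) with hQdef
    have hP5 : (5:ℝ) ≤ P := by
      have : prime 3 ≤ prime n := by
        unfold prime
        exact (Nat.nth_le_nth Nat.infinite_setOf_prime).mpr (by omega)
      rw [prime_three] at this
      rw [hPdef]; exact_mod_cast this
    have hPQ : P < Q := by
      have : prime n < prime (n+1) := by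
        unfold prime
        exact (Nat.nth_lt_nth Nat.infinite_setOf_prime).mpr (by omega)
      rw [hPdef, hQdef]; exact_mod_cast this
    have hlogP : 0 < Real.log P := Real.log_pos (by linarith)
    have hlogQ : Real.log P ≤ Real.log Q := Real.log_le_log (by linarith) (le_of_lt hPQ)
    have hsP : 0 < Real.sqrt P := Real.sqrt_pos.mpr (by linarith)
    have hsq : Real.sqrt P < Real.sqrt Q := Real.sqrt_lt_sqrt (by linarith) hPQ
    have key : Real.sqrt Q - Real.sqrt P < (Q - P) / (2 * Real.sqrt P) := by
      rw [lt_div_iff₀ (by positivity)]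
      have h1 : Real.sqrt Q * Real.sqrt Q = Q := Real.mul_self_sqrt (by linarith)
      have h2 : Real.sqrt P * Real.sqrt P = P := Real.mul_self_sqrt (by linarith)
      nlinarith [hsq, hsP]
    have hgap := h n h3
    have step2 : (Q - P) / (2 * Real.sqrt P) / Real.log P < 11/25 := by
      rw [div_div, div_lt_iff₀ (by positivity)]
      have : 11/25 * (2 * Real.sqrt P * Real.log P) = 22/25 * Real.sqrt P * Real.log P := by ring
      rw [this]
      exact hgap
    calc Real.sqrt Q / Real.log Q - Real.sqrt P / Real.log P
        ≤ Real.sqrt Q / Real.log P - Real.sqrt P / Real.log P := by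
          have := div_le_div_of_nonneg_left (Real.sqrt_nonneg Q) hlogP hlogQ
          linarith
      _ = (Real.sqrt Q - Real.sqrt P) / Real.log P := (sub_div _ _ _).symm
      _ < (Q - P) / (2 * Real.sqrt P) / Real.log P := (div_lt_div_iff_of_pos_right hlogP).mpr key
      _ < 11/25 := step2
end

section
/- Suppose for all n ≥ 3 the prime gap satisfies p_{n+1} - p_n < (22/25) · sqrt(p_n) · ln(p_n). Then for all n ≥ 3 and all real m > 2, p_{n+1}^(1/m) - p_n^(1/m) < 44/(25 · e · (m-2)). -/
open Real

lemma rpow_sub_rpow_le_mul_rpow_mul_sub {a b c : ℝ} (ha : 0 ≤ a) (hb : 0 < b)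
    (hc₀ : 0 ≤ c) (hc₁ : c ≤ 1) :
    a ^ c - b ^ c ≤ c * b ^ (c - 1) * (a - b) := by
  have bernoulli : (a / b) ^ c ≤ 1 + c * (a / b - 1) := by
    simpa using rpow_one_add_le_one_add_mul_self (s := a / b - 1)
      (by linarith [div_nonneg ha hb.le]) hc₀ hc₁
  have hpow : b ^ (c - 1) = b ^ c / b := by rw [rpow_sub hb, rpow_one]
  calc a ^ c - b ^ c = b ^ c * (a / b) ^ c - b ^ c := by
        rw [← mul_rpow hb.le (div_nonneg ha hb.le), mul_div_cancel₀ _ hb.ne']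
    _ ≤ b ^ c * (1 + c * (a / b - 1)) - b ^ c := by gcongr
    _ = c * b ^ (c - 1) * (a - b) := by rw [hpow]; field_simp; ring

lemma log_div_rpow_le_inv_exp_one_mul {x t : ℝ} (hx : 0 < x) (ht : 0 < t) :
    log x / x ^ t ≤ (exp 1 * t)⁻¹ := by
  have key : exp 1 * (log x * t) ≤ x ^ t := by
    rw [rpow_def_of_pos hx]; exact exp_one_mul_le_exp
  rw [div_le_iff₀ (rpow_pos_of_pos hx t), ← div_eq_inv_mul, le_div_iff₀ (by positivity)]
  linarith

lemma rpow_one_div_sub_rpow_one_div_lt {a b K m : ℝ} (hb : 0 < b) (hba : b ≤ a) (hK : 0 ≤ K)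
    (hm : 2 < m) (hgap : a - b < K * √b * log b) :
    a ^ (1 / m) - b ^ (1 / m) < 2 * K / (exp 1 * (m - 2)) := by
  have hm₀ : 0 < m := by linarith
  set t := 1 / 2 - 1 / m with ht_def
  have ht : 0 < t := by
    rw [ht_def, sub_pos]; exact one_div_lt_one_div_of_lt two_pos hm
  have hc₁ : 1 / m ≤ 1 := by rw [div_le_one hm₀]; linarith
  have hroot : b ^ (1 / m - 1) * √b = (b ^ t)⁻¹ := by
    rw [sqrt_eq_rpow, ← rpow_add hb, ← rpow_neg hb.le, ht_def]; ring_nf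
  calc a ^ (1 / m) - b ^ (1 / m) ≤ 1 / m * b ^ (1 / m - 1) * (a - b) :=
        rpow_sub_rpow_le_mul_rpow_mul_sub (hb.le.trans hba) hb (by positivity) hc₁
    _ < 1 / m * b ^ (1 / m - 1) * (K * √b * log b) := by gcongr
    _ = K / m * (log b / b ^ t) := by rw [div_eq_mul_inv (log b), ← hroot]; ring
    _ ≤ K / m * (exp 1 * t)⁻¹ := by
        gcongr
        exact log_div_rpow_le_inv_exp_one_mul hb ht
    _ = 2 * K / (exp 1 * (m - 2)) := by
        have : m - 2 ≠ 0 := by linarith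
        rw [ht_def]; field_simp

theorem higher_root_andrica
    (h : ∀ n : ℕ, 3 ≤ n →
      (prime (n+1) : ℝ) - prime n <
        22/25 * Real.sqrt (prime n) * Real.log (prime n)) :
    ∀ n : ℕ, 3 ≤ n → ∀ m : ℝ, 2 < m →
      (prime (n+1) : ℝ) ^ (1/m) - (prime n : ℝ) ^ (1/m) <
        44 / (25 * Real.exp 1 * (m - 2)) := by
  intro n hn m hm
  have hpos : (0 : ℝ) < prime n := by exact_mod_cast (Nat.prime_nth_prime _).pos
  have hmono : (prime n : ℝ) ≤ prime (n + 1) := by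
    exact_mod_cast Nat.nth_monotone Nat.infinite_setOfPred_prime (by omega)
  convert rpow_one_div_sub_rpow_one_div_lt hpos hmono (by norm_num) hm (h n hn) using 1
  have : m - 2 ≠ 0 := by linarith
  field_simp; norm_num
end

section
/- Suppose for all n ≥ 3 the prime gap satisfies p_{n+1} - p_n < (22/25) · sqrt(p_n) · ln(p_n). Then for all n ≥ 1, p_{n+1}^(1/3) - p_n^(1/3) < 13/20. -/
private lemma cube_diff (a b : ℝ) (ha : 1 ≤ a) (hab : a ≤ b) :
    b ^ ((1:ℝ)/3) - a ^ ((1:ℝ)/3) ≤ (b - a) / (3 * a ^ ((2:ℝ)/3)) := by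
  have ha0 : (0:ℝ) < a := lt_of_lt_of_le one_pos ha
  have hb0 : (0:ℝ) < b := lt_of_lt_of_le ha0 hab
  set u := a ^ ((1:ℝ)/3) with hu_def
  set v := b ^ ((1:ℝ)/3) with hv_def
  have hu : 0 < u := Real.rpow_pos_of_pos ha0 _
  have hv : 0 < v := Real.rpow_pos_of_pos hb0 _
  have hu3 : u ^ (3:ℕ) = a := by
    rw [hu_def, ← Real.rpow_natCast (a ^ ((1:ℝ)/3)) 3, ← Real.rpow_mul ha0.le]
    norm_num
  have hv3 : v ^ (3:ℕ) = b := by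
    rw [hv_def, ← Real.rpow_natCast (b ^ ((1:ℝ)/3)) 3, ← Real.rpow_mul hb0.le]
    norm_num
  have h23 : a ^ ((2:ℝ)/3) = u ^ (2:ℕ) := by
    rw [hu_def, ← Real.rpow_natCast (a ^ ((1:ℝ)/3)) 2, ← Real.rpow_mul ha0.le]
    norm_num
  have huv : u ≤ v := Real.rpow_le_rpow ha0.le hab (by norm_num)
  rw [h23, le_div_iff₀ (by positivity)]
  nlinarith [mul_nonneg (mul_nonneg (sub_nonneg.2 huv) (sub_nonneg.2 huv))
    (by positivity : (0:ℝ) ≤ v + 2*u), hu3, hv3]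

private lemma log_le_div_e {w : ℝ} (hw : 0 < w) : Real.log w ≤ w / Real.exp 1 := by
  have h := Real.log_le_sub_one_of_pos (show 0 < w / Real.exp 1 by positivity)
  rw [Real.log_div hw.ne' (Real.exp_ne_zero 1), Real.log_exp] at h
  linarith

theorem cube_root_andrica
    (h : ∀ n : ℕ, 3 ≤ n →
      (prime (n+1) : ℝ) - prime n <
        22/25 * Real.sqrt (prime n) * Real.log (prime n)) :
    ∀ n : ℕ, 1 ≤ n →
      (prime (n+1) : ℝ) ^ ((1:ℝ)/3) - (prime n : ℝ) ^ ((1:ℝ)/3) < 13/20 := by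
  intro n hn
  match n, hn with
  | 1, _ =>
    have h1 : prime 1 = 2 := Nat.nth_prime_zero_eq_two
    have h2 : prime 2 = 3 := Nat.nth_prime_one_eq_three
    rw [h1, h2]
    have hd := cube_diff 2 3 (by norm_num) (by norm_num)
    have h1le : (1:ℝ) ≤ (2:ℝ) ^ ((2:ℝ)/3) :=
      Real.one_le_rpow one_le_two (by norm_num)
    have : ((3:ℝ) - 2) / (3 * (2:ℝ) ^ ((2:ℝ)/3)) ≤ 1/3 := by
      rw [div_le_iff₀ (by positivity)]
      nlinarith
    push_cast
    linarith
  | 2, _ =>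
    have h2 : prime 2 = 3 := Nat.nth_prime_one_eq_three
    have h3 : prime 3 = 5 := by
      show Nat.nth Nat.Prime 2 = 5
      have : Nat.count Nat.Prime 5 = 2 := by norm_num [Nat.count_succ]
      rw [← this]
      exact Nat.nth_count (by norm_num)
    rw [h2, h3]
    have hd := cube_diff 3 5 (by norm_num) (by norm_num)
    have h2le : (2:ℝ) ≤ (3:ℝ) ^ ((2:ℝ)/3) := by
      have h8 : ((2:ℝ)) ^ (3:ℕ) ≤ ((3:ℝ) ^ ((2:ℝ)/3)) ^ (3:ℕ) := by
        rw [← Real.rpow_natCast ((3:ℝ) ^ ((2:ℝ)/3)) 3, ← Real.rpow_mul (by norm_num)]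
        norm_num
      exact le_of_pow_le_pow_left₀ (by norm_num) (by positivity) h8
    have : ((5:ℝ) - 3) / (3 * (3:ℝ) ^ ((2:ℝ)/3)) ≤ 1/3 := by
      rw [div_le_iff₀ (by positivity)]
      nlinarith
    push_cast
    linarith
  | (m+3), _ =>
    set N := m + 3 with hN
    have hN3 : 3 ≤ N := by omega
    have hp : (prime N).Prime := Nat.prime_nth_prime _
    have ha2 : 2 ≤ prime N := hp.two_le
    have hlt : prime N < prime (N+1) := by
      show Nat.nth Nat.Prime (N-1) < Nat.nth Nat.Prime (N+1-1)
      rw [Nat.nth_lt_nth Nat.infinite_setOf_prime]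
      omega
    set a : ℝ := (prime N : ℝ) with ha_def
    set b : ℝ := (prime (N+1) : ℝ) with hb_def
    have ha1 : (1:ℝ) ≤ a := by
      rw [ha_def]; exact_mod_cast le_trans (by norm_num) ha2
    have ha2' : (2:ℝ) ≤ a := by rw [ha_def]; exact_mod_cast ha2
    have ha0 : (0:ℝ) < a := lt_of_lt_of_le one_pos ha1
    have hab : a ≤ b := by
      rw [ha_def, hb_def]; exact_mod_cast hlt.le
    have hd := cube_diff a b ha1 hab
    refine lt_of_le_of_lt hd ?_
    set w : ℝ := a ^ ((1:ℝ)/6) with hw_def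
    have hw : 0 < w := Real.rpow_pos_of_pos ha0 _
    have hw1 : 1 ≤ w := Real.one_le_rpow ha1 (by norm_num)
    have hsqrt : Real.sqrt a = w ^ (3:ℕ) := by
      rw [Real.sqrt_eq_rpow, hw_def, ← Real.rpow_natCast (a ^ ((1:ℝ)/6)) 3,
        ← Real.rpow_mul ha0.le]
      norm_num
    have h23 : a ^ ((2:ℝ)/3) = w ^ (4:ℕ) := by
      rw [hw_def, ← Real.rpow_natCast (a ^ ((1:ℝ)/6)) 4, ← Real.rpow_mul ha0.le]
      norm_num
    have hloga : Real.log a = 6 * Real.log w := by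
      rw [hw_def, Real.log_rpow ha0]; ring
    have hlw : Real.log w ≤ w / Real.exp 1 := log_le_div_e hw
    have hE : (2.71:ℝ) < Real.exp 1 := by
      have := Real.exp_one_gt_d9
      norm_num at this ⊢
      linarith
    have hE0 : (0:ℝ) < Real.exp 1 := Real.exp_pos 1
    have hL : Real.log w * Real.exp 1 ≤ w := by
      rw [← le_div_iff₀ hE0]; exact hlw
    have hlogw : 0 ≤ Real.log w := Real.log_nonneg hw1
    have key : b - a < 22/25 * (w ^ (3:ℕ)) * (6 * Real.log w) := by
      rw [← hsqrt, ← hloga]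
      exact h N hN3
    rw [h23, div_lt_iff₀ (by positivity)]
    -- goal : b - a < 13/20 * (3 * w^4)
    have hY : 0 ≤ w ^ (3:ℕ) * Real.log w := by positivity
    have h3 : 2.71 * (w ^ (3:ℕ) * Real.log w) ≤ w ^ (4:ℕ) := by
      have h4 : Real.exp 1 * (w ^ (3:ℕ) * Real.log w) ≤ w ^ (4:ℕ) := by
        have := mul_le_mul_of_nonneg_left hL (by positivity : (0:ℝ) ≤ w ^ (3:ℕ))
        calc Real.exp 1 * (w ^ (3:ℕ) * Real.log w)
            = w ^ (3:ℕ) * (Real.log w * Real.exp 1) := by ring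
          _ ≤ w ^ (3:ℕ) * w := this
          _ = w ^ (4:ℕ) := by ring
      nlinarith
    linarith
end

section
/- Suppose for all n ≥ 3 the prime gap satisfies p_{n+1} - p_n < (22/25) · sqrt(p_n) · ln(p_n). Then for all n ≥ 1, p_{n+1}^(1/4) - p_n^(1/4) < 13/40. -/
open Real

noncomputable def cmsBound (x : ℝ) : ℝ := 22 / 25 * √x * log x

lemma log_le_div_exp_one {x : ℝ} (hx : 0 < x) : log x ≤ x / exp 1 := by
  have := log_le_sub_one_of_pos (div_pos hx (exp_pos 1))
  rw [log_div hx.ne' (exp_pos 1).ne', log_exp] at this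
  linarith

lemma pow_four_add_cmsBound_le {t : ℝ} (ht : 0 < t) :
    t ^ 4 + cmsBound (t ^ 4) ≤ (t + 13 / 40) ^ 4 := by
  have hsqrt : √(t ^ 4) = t ^ 2 := by
    rw [show t ^ 4 = (t ^ 2) ^ 2 by ring, sqrt_sq (by positivity)]
  have hlog : log t ≤ 65 / 176 * t := by
    refine (log_le_div_exp_one ht).trans ?_
    rw [div_le_iff₀ (exp_pos 1)]
    nlinarith [exp_one_gt_d9]
  calc t ^ 4 + cmsBound (t ^ 4) = t ^ 4 + 88 / 25 * t ^ 2 * log t := by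
        rw [cmsBound, hsqrt, log_pow]; push_cast; ring
    _ ≤ t ^ 4 + 88 / 25 * t ^ 2 * (65 / 176 * t) := by gcongr
    _ = t ^ 4 + 4 * (13 / 40) * t ^ 3 := by ring
    _ ≤ (t + 13 / 40) ^ 4 := by nlinarith [pow_pos ht 2, pow_pos ht 1]

lemma rpow_one_div_four_sub_lt_sub {a b c d : ℝ} (ha : 0 ≤ a) (hc : 0 ≤ c) (hd : 0 ≤ d)
    (hac : a < c ^ 4) (hdb : d ^ 4 ≤ b) :
    a ^ (1 / 4 : ℝ) - b ^ (1 / 4 : ℝ) < c - d := by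
  have hb : 0 ≤ b := (pow_nonneg hd 4).trans hdb
  have hca : a ^ (1 / 4 : ℝ) < c := by
    rwa [one_div, rpow_inv_lt_iff_of_pos ha hc four_pos, rpow_ofNat]
  have hdb' : d ≤ b ^ (1 / 4 : ℝ) := by
    rwa [one_div, le_rpow_inv_iff_of_pos hd hb four_pos, rpow_ofNat]
  linarith

lemma rpow_one_div_four_sub_lt_of_sub_lt_cmsBound {a b : ℝ} (ha : 0 ≤ a) (hb : 0 < b)
    (hab : a - b < cmsBound b) :
    a ^ (1 / 4 : ℝ) - b ^ (1 / 4 : ℝ) < 13 / 40 := by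
  set t := b ^ (1 / 4 : ℝ)
  have ht : 0 < t := rpow_pos_of_pos hb _
  have htb : t ^ 4 = b := by
    simpa [t, one_div] using rpow_inv_natCast_pow hb.le (n := 4) (by norm_num)
  have hat : a < (t + 13 / 40) ^ 4 := by
    have := pow_four_add_cmsBound_le ht
    rw [htb] at this
    linarith
  simpa only [add_sub_cancel_left] using rpow_one_div_four_sub_lt_sub ha (by positivity) ht.le hat htb.le

theorem fourth_root_andrica
    (h : ∀ n : ℕ, 3 ≤ n →
      (prime (n+1) : ℝ) - prime n <
        22/25 * Real.sqrt (prime n) * Real.log (prime n)) :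
    ∀ n : ℕ, 1 ≤ n →
      (prime (n+1) : ℝ) ^ ((1:ℝ)/4) - (prime n : ℝ) ^ ((1:ℝ)/4) < 13/40 := by
  intro n hn
  obtain rfl | rfl | hn3 : n = 1 ∨ n = 2 ∨ 3 ≤ n := by omega
  · rw [show prime 2 = 3 from Nat.nth_prime_one_eq_three,
      show prime 1 = 2 from Nat.nth_prime_zero_eq_two]
    calc _ < (1.32 : ℝ) - 1.18 :=
          rpow_one_div_four_sub_lt_sub (by norm_num) (by norm_num) (by norm_num)
            (by norm_num) (by norm_num)
      _ < 13 / 40 := by norm_num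
  · rw [show prime 3 = 5 from Nat.nth_prime_two_eq_five,
      show prime 2 = 3 from Nat.nth_prime_one_eq_three]
    calc _ < (1.496 : ℝ) - 1.31 :=
          rpow_one_div_four_sub_lt_sub (by norm_num) (by norm_num) (by norm_num)
            (by norm_num) (by norm_num)
      _ < 13 / 40 := by norm_num
  · exact rpow_one_div_four_sub_lt_of_sub_lt_cmsBound (by positivity)
      (mod_cast (Nat.prime_nth_prime _).pos) (h n hn3)
end

section
/- Let m ≥ 0 be real and C > 0, and suppose that for all n with p_n > x₀ the prime gap satisfies p_{n+1} - p_n < C · p_n / (ln p_n)^m. Then for all n with p_n > max(x₀, e^m), (ln p_{n+1})^(m+1) - (ln p_n)^(m+1) < (m+1) · C. -/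
/-!
Let `f(t) = (log t)^(m+1)`, so `f'(t) = (m+1) (log t)^m / t`. Substituting `t = e^u`, the
factor `(log t)^m / t = u^m e^(-u)` decreases once `u ≥ m`, so for `e^m < p_n ≤ t` the mean value
inequality gives `f(p_{n+1}) - f(p_n) ≤ f'(p_n) (p_{n+1} - p_n)`, and the gap hypothesis bounds
this by `(m+1) C`.
-/

open Real Set

lemma rpow_div_exp_le_rpow_div_exp {m u s : ℝ} (hm : 0 ≤ m) (hu : 0 < u) (hmu : m ≤ u)
    (hus : u ≤ s) : s ^ m / exp s ≤ u ^ m / exp u := by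
  have hs : 0 < s := hu.trans_le hus
  rw [← log_le_log_iff (by positivity) (by positivity), log_div (by positivity) (exp_ne_zero _),
    log_div (by positivity) (exp_ne_zero _), log_rpow hs, log_rpow hu, log_exp, log_exp]
  have hlog : log s - log u ≤ s / u - 1 := by
    rw [← log_div hs.ne' hu.ne']
    exact log_le_sub_one_of_pos (by positivity)
  have hratio : 0 ≤ s / u - 1 := by rw [sub_nonneg, le_div_iff₀ hu, one_mul]; exact hus
  have : m * (log s - log u) ≤ s - u :=
    calc m * (log s - log u) ≤ m * (s / u - 1) := mul_le_mul_of_nonneg_left hlog hm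
      _ ≤ u * (s / u - 1) := mul_le_mul_of_nonneg_right hmu hratio
      _ = s - u := by field_simp
  linarith

lemma antitoneOn_log_rpow_div_self {m : ℝ} (hm : 0 ≤ m) :
    AntitoneOn (fun x => log x ^ m / x) (Ioi (exp m)) := by
  intro a ha b hb hab
  have ha0 : 0 < a := (exp_pos m).trans ha
  have hma : m < log a := (lt_log_iff_exp_lt ha0).mpr ha
  have key := rpow_div_exp_le_rpow_div_exp hm (hm.trans_lt hma) hma.le (log_le_log ha0 hab)
  rwa [exp_log ha0, exp_log (ha0.trans_le hab)] at key

lemma hasDerivAt_log_rpow_add_one {m x : ℝ} (hm : 0 ≤ m) (hx : x ≠ 0) :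
    HasDerivAt (fun y => log y ^ (m + 1)) ((m + 1) * (log x ^ m / x)) x := by
  convert (hasDerivAt_log hx).rpow_const (p := m + 1) (Or.inr (by linarith)) using 1
  rw [add_sub_cancel_right]
  ring

lemma log_rpow_add_one_sub_le {m a b : ℝ} (hm : 0 ≤ m) (ha : exp m < a) (hab : a ≤ b) :
    log b ^ (m + 1) - log a ^ (m + 1) ≤ (m + 1) * (log a ^ m / a) * (b - a) := by
  have ha0 : 0 < a := (exp_pos m).trans ha
  have hderiv : ∀ x ∈ Ici a,
      HasDerivAt (fun y => log y ^ (m + 1)) ((m + 1) * (log x ^ m / x)) x :=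
    fun x hx => hasDerivAt_log_rpow_add_one hm (ha0.trans_le hx).ne'
  refine (convex_Ici a).image_sub_le_mul_sub_of_deriv_le
    (fun x hx => (hderiv x hx).continuousAt.continuousWithinAt)
    (fun x hx => (hderiv x (interior_subset hx)).differentiableAt.differentiableWithinAt)
    ?_ a self_mem_Ici b hab hab
  rw [interior_Ici]
  intro x hx
  rw [(hderiv x (mem_Ici.mpr hx.out.le)).deriv]
  have := antitoneOn_log_rpow_div_self hm ha (ha.trans hx) hx.out.le
  gcongr

lemma prime_le_prime_succ (n : ℕ) : prime n ≤ prime (n + 1) :=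
  Nat.nth_monotone Nat.infinite_setOfPred_prime (by omega)

theorem explicit_unconditional_bound_general (m C x₀ : ℝ) (hm : 0 ≤ m)
    (h : ∀ n : ℕ, x₀ < prime n →
      (prime (n+1) : ℝ) - prime n < C * prime n / Real.log (prime n) ^ m) :
    ∀ n : ℕ, max x₀ (Real.exp m) < prime n →
      Real.log (prime (n+1)) ^ (m+1) - Real.log (prime n) ^ (m+1) <
        (m+1) * C := by
  intro n hn
  obtain ⟨hx₀, hexp⟩ := max_lt_iff.mp hn
  have hab : (prime n : ℝ) ≤ prime (n + 1) := by exact_mod_cast prime_le_prime_succ n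
  set a : ℝ := (prime n : ℝ)
  set b : ℝ := (prime (n + 1) : ℝ)
  have ha : 0 < a := (exp_pos m).trans hexp
  have hlog : 0 < log a ^ m :=
    rpow_pos_of_pos (hm.trans_lt ((lt_log_iff_exp_lt ha).mpr hexp)) m
  calc log b ^ (m + 1) - log a ^ (m + 1) ≤ (m + 1) * (log a ^ m / a) * (b - a) :=
        log_rpow_add_one_sub_le hm hexp hab
    _ < (m + 1) * (log a ^ m / a) * (C * a / log a ^ m) :=
        mul_lt_mul_of_pos_left (h n hx₀) (by positivity)
    _ = (m + 1) * C := by field_simp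

theorem explicit_unconditional_bound (m C x₀ : ℝ) (hm : 0 ≤ m) (hC : 0 < C)
    (h : ∀ n : ℕ, x₀ < prime n →
      (prime (n+1) : ℝ) - prime n < C * prime n / Real.log (prime n) ^ m) :
    ∀ n : ℕ, max x₀ (Real.exp m) < prime n →
      Real.log (prime (n+1)) ^ (m+1) - Real.log (prime n) ^ (m+1) <
        (m+1) * C :=
  explicit_unconditional_bound_general m C x₀ hm h
end
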